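/- arXiv:1706.02620 — 2 statements merged into one kernel-verified Lean document; each statement's English description precedes it below -/
import Mathlib

section
/- Let 1 < p, s < ∞ and let w be a weight. Then w ∈ A_p ∩ RH_s if and only if w^s ∈ A_q, where q = s(p − 1) + 1. Moreover, in the forward direction [w^s]_{A_q} ≤ [w]_{RH_s}^s [w]_{A_p}^s. -/
open MeasureTheory ENNReal
open scoped Classical

noncomputable section

variable {n : ℕ}

/-- An axis-parallel half-open cube in `ℝⁿ`. -/
def IsCube (Q : Set (Fin n → ℝ)) : Prop :=
  ∃ (a : Fin n → ℝ) (l : ℝ), 0 < l ∧ Q = {x | ∀ i, a i ≤ x i ∧ x i < a i + l}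

/-- The average `⨍_Q f` of an `ℝ≥0∞`-valued function over a set, w.r.t. Lebesgue measure. -/
def eavg (Q : Set (Fin n → ℝ)) (f : (Fin n → ℝ) → ℝ≥0∞) : ℝ≥0∞ :=
  (∫⁻ x in Q, f x) / volume Q

/-- A weight: measurable, a.e. positive and finite, and locally integrable. -/
def IsWeight (w : (Fin n → ℝ) → ℝ≥0∞) : Prop :=
  Measurable w ∧ (∀ᵐ x ∂(volume : Measure (Fin n → ℝ)), 0 < w x ∧ w x < ∞) ∧
    ∀ Q : Set (Fin n → ℝ), IsCube Q → ∫⁻ x in Q, w x < ∞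

/-- The Muckenhoupt `A_p` constant, `1 ≤ p < ∞` (ess-sup form when `p = 1`). -/
def ApConst (p : ℝ) (w : (Fin n → ℝ) → ℝ≥0∞) : ℝ≥0∞ :=
  if p = 1 then
    ⨆ (Q : Set (Fin n → ℝ)) (_ : IsCube Q),
      essSup (fun x => eavg Q w / w x) (volume.restrict Q)
  else
    ⨆ (Q : Set (Fin n → ℝ)) (_ : IsCube Q),
      eavg Q w * (eavg Q fun x => w x ^ (1 - p / (p - 1))) ^ (p - 1)

/-- Membership in the Muckenhoupt class `A_p`. -/
def MemAp (p : ℝ) (w : (Fin n → ℝ) → ℝ≥0∞) : Prop := ApConst p w < ∞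

/-- The reverse Hölder `RH_s` constant. -/
def RHConst (s : ℝ) (w : (Fin n → ℝ) → ℝ≥0∞) : ℝ≥0∞ :=
  ⨆ (Q : Set (Fin n → ℝ)) (_ : IsCube Q),
    (eavg Q fun x => w x ^ s) ^ (1 / s) / eavg Q w

/-- Membership in the reverse Hölder class `RH_s`. -/
def MemRH (s : ℝ) (w : (Fin n → ℝ) → ℝ≥0∞) : Prop := RHConst s w < ∞

/-- The `RH_∞` constant. -/
def RHInfConst (w : (Fin n → ℝ) → ℝ≥0∞) : ℝ≥0∞ :=
  ⨆ (Q : Set (Fin n → ℝ)) (_ : IsCube Q),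
    essSup (fun x => w x / eavg Q w) (volume.restrict Q)

/-- Membership in `RH_∞`. -/
def MemRHInf (w : (Fin n → ℝ) → ℝ≥0∞) : Prop := RHInfConst w < ∞

/-- The Hardy–Littlewood maximal operator (over all cubes containing `x`). -/
def maximal (f : (Fin n → ℝ) → ℝ) (x : Fin n → ℝ) : ℝ≥0∞ :=
  ⨆ (Q : Set (Fin n → ℝ)) (_ : IsCube Q) (_ : x ∈ Q),
    eavg Q fun y => ENNReal.ofReal |f y|

/-- The Hardy–Littlewood maximal operator acting on `ℝ≥0∞`-valued functions. -/
def emaximal (f : (Fin n → ℝ) → ℝ≥0∞) (x : Fin n → ℝ) : ℝ≥0∞ :=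
  ⨆ (Q : Set (Fin n → ℝ)) (_ : IsCube Q) (_ : x ∈ Q), eavg Q f

/-- The norm `‖f‖_{L^p(w)} = (∫ f^p w dx)^(1/p)`. -/
def wLpNorm (p : ℝ) (w f : (Fin n → ℝ) → ℝ≥0∞) : ℝ≥0∞ :=
  (∫⁻ x, f x ^ p * w x) ^ (1 / p)

/-!
With `S = ⨍_Q w^s`, `A = ⨍_Q w` and `B = ⨍_Q w^{1-p'}`, the exponents match up
(`q - 1 = s(p-1)` and `(w^s)^{1-q'} = w^{1-p'}`), so the `A_q` quantity of `w^s` on `Q` is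
`(S^{1/s} B^{p-1})^s`. The reverse Hölder inequality `S^{1/s} ≤ [w]_{RH_s} A` turns this into
`[w]_{RH_s}^s (A B^{p-1})^s`. Conversely, Jensen's inequality `A ≤ S^{1/s}` bounds the `A_p`
quantity `A B^{p-1}` by `S^{1/s} B^{p-1}`, and Hölder's inequality `1 ≤ A B^{p-1}` gives
`S^{1/s} ≤ (S^{1/s} B^{p-1}) A`, the reverse Hölder bound.
-/

lemma IsCube.exists_volume_eq {Q : Set (Fin n → ℝ)} (hQ : IsCube Q) :
    ∃ l : ℝ, 0 < l ∧ volume Q = ENNReal.ofReal l ^ n := by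
  obtain ⟨a, l, hl, rfl⟩ := hQ
  have hpi : {x : Fin n → ℝ | ∀ i, a i ≤ x i ∧ x i < a i + l}
      = Set.univ.pi fun i => Set.Ico (a i) (a i + l) := by
    ext x
    simp [Set.mem_pi]
  refine ⟨l, hl, ?_⟩
  rw [hpi, volume_pi_pi]
  simp [Real.volume_Ico]

lemma IsCube.volume_ne_zero {Q : Set (Fin n → ℝ)} (hQ : IsCube Q) : volume Q ≠ 0 := by
  obtain ⟨l, hl, hvol⟩ := hQ.exists_volume_eq
  rw [hvol]
  exact pow_ne_zero _ (ENNReal.ofReal_pos.mpr hl).ne'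

lemma IsCube.volume_ne_top {Q : Set (Fin n → ℝ)} (hQ : IsCube Q) : volume Q ≠ ∞ := by
  obtain ⟨l, -, hvol⟩ := hQ.exists_volume_eq
  rw [hvol]
  exact ENNReal.pow_ne_top ENNReal.ofReal_ne_top

section Average

variable {Q : Set (Fin n → ℝ)} {f g : (Fin n → ℝ) → ℝ≥0∞}

lemma eavg_eq_lintegral_smul (Q : Set (Fin n → ℝ)) (f : (Fin n → ℝ) → ℝ≥0∞) :
    eavg Q f = ∫⁻ x, f x ∂((volume Q)⁻¹ • volume.restrict Q) := by
  rw [lintegral_smul_measure, eavg, ENNReal.div_eq_inv_mul, smul_eq_mul]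

lemma eavg_mul_le {a b : ℝ} (hab : a.HolderConjugate b) (hf : Measurable f) (hg : Measurable g) :
    eavg Q (fun x => f x * g x)
      ≤ (eavg Q fun x => f x ^ a) ^ (1 / a) * (eavg Q fun x => g x ^ b) ^ (1 / b) := by
  simp only [eavg_eq_lintegral_smul]
  exact ENNReal.lintegral_mul_le_Lp_mul_Lq _ hab hf.aemeasurable hg.aemeasurable

lemma eavg_one (h0 : volume Q ≠ 0) (htop : volume Q ≠ ∞) : eavg Q (fun _ => 1) = 1 := by
  simp [eavg, ENNReal.div_self h0 htop]

lemma eavg_le_eavg_rpow {s : ℝ} (hs : 1 < s) (h0 : volume Q ≠ 0) (htop : volume Q ≠ ∞)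
    (hf : Measurable f) : eavg Q f ≤ (eavg Q fun x => f x ^ s) ^ (1 / s) := by
  simpa [eavg_one h0 htop] using
    eavg_mul_le (Q := Q) (g := fun _ => 1) (.conjExponent hs) hf measurable_const

lemma eavg_ne_zero (h0 : volume Q ≠ 0) (htop : volume Q ≠ ∞) (hf : Measurable f)
    (hpos : ∀ᵐ x ∂volume, f x ≠ 0) : eavg Q f ≠ 0 := by
  refine ENNReal.div_ne_zero.mpr ⟨?_, htop⟩
  rw [← pos_iff_ne_zero, setLIntegral_pos_iff hf, Set.inter_comm, measure_inter_conull]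
  · exact pos_iff_ne_zero.mpr h0
  · simpa [Function.compl_support, ae_iff] using hpos

end Average

lemma IsWeight.eavg_ne_zero {w : (Fin n → ℝ) → ℝ≥0∞} (hw : IsWeight w) {Q : Set (Fin n → ℝ)}
    (hQ : IsCube Q) : eavg Q w ≠ 0 :=
  _root_.eavg_ne_zero hQ.volume_ne_zero hQ.volume_ne_top hw.1 (hw.2.1.mono fun _ hx => hx.1.ne')

lemma IsWeight.eavg_ne_top {w : (Fin n → ℝ) → ℝ≥0∞} (hw : IsWeight w) {Q : Set (Fin n → ℝ)}
    (hQ : IsCube Q) : eavg Q w ≠ ∞ :=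
  ENNReal.div_ne_top (hw.2.2 Q hQ).ne hQ.volume_ne_zero

lemma one_le_eavg_mul_eavg_rpow {p : ℝ} (hp : 1 < p) {w : (Fin n → ℝ) → ℝ≥0∞}
    (hw : Measurable w) (hw' : ∀ᵐ x ∂volume, 0 < w x ∧ w x < ∞) {Q : Set (Fin n → ℝ)}
    (h0 : volume Q ≠ 0) (htop : volume Q ≠ ∞) :
    1 ≤ eavg Q w * (eavg Q fun x => w x ^ (1 - p / (p - 1))) ^ (p - 1) := by
  have hp0 : 0 < p := zero_lt_one.trans hp
  have hp1 : p - 1 ≠ 0 := sub_ne_zero.mpr hp.ne'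
  have hpq : p.HolderConjugate (p / (p - 1)) := .conjExponent hp
  -- Hölder applied to `1 = w^{1/p} · w^{-1/p}`
  have hone : eavg Q (fun x => w x ^ (1 / p) * w x ^ (-1 / p)) = 1 := by
    rw [← eavg_one h0 htop]
    refine congrArg (· / volume Q) (lintegral_congr_ae (ae_restrict_of_ae ?_))
    filter_upwards [hw'] with x hx
    rw [← ENNReal.rpow_add _ _ hx.1.ne' hx.2.ne, ← add_div, add_neg_cancel, zero_div,
      ENNReal.rpow_zero]
  have hexp₁ : 1 / p * p = 1 := by field_simp
  have hexp₂ : -1 / p * (p / (p - 1)) = 1 - p / (p - 1) := by field_simp; ring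
  have hexp₃ : 1 / (p / (p - 1)) * p = p - 1 := by field_simp
  have holder := eavg_mul_le (Q := Q) hpq (hw.pow_const (1 / p)) (hw.pow_const (-1 / p))
  simp only [hone, ← ENNReal.rpow_mul, hexp₁, hexp₂, ENNReal.rpow_one] at holder
  calc (1 : ℝ≥0∞) = 1 ^ p := (ENNReal.one_rpow p).symm
    _ ≤ _ := ENNReal.rpow_le_rpow holder hp0.le
    _ = _ := by
      rw [ENNReal.mul_rpow_of_nonneg _ _ hp0.le, ← ENNReal.rpow_mul, ← ENNReal.rpow_mul, hexp₁,
        hexp₃, ENNReal.rpow_one]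

def apCube (p : ℝ) (Q : Set (Fin n → ℝ)) (w : (Fin n → ℝ) → ℝ≥0∞) : ℝ≥0∞ :=
  eavg Q w * (eavg Q fun x => w x ^ (1 - p / (p - 1))) ^ (p - 1)

section ApCube

variable {p s : ℝ} {w : (Fin n → ℝ) → ℝ≥0∞} {Q : Set (Fin n → ℝ)}

lemma apConst_of_ne_one (hp : p ≠ 1) (w : (Fin n → ℝ) → ℝ≥0∞) :
    ApConst p w = ⨆ (Q : Set (Fin n → ℝ)) (_ : IsCube Q), apCube p Q w :=
  if_neg hp

lemma apCube_le_apConst (hp : p ≠ 1) (hQ : IsCube Q) : apCube p Q w ≤ ApConst p w := by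
  rw [apConst_of_ne_one hp]
  exact le_iSup₂ (f := fun Q (_ : IsCube Q) => apCube p Q w) Q hQ

lemma eavg_rpow_le_rhConst_mul (hQ : IsCube Q) (h0 : eavg Q w ≠ 0) (htop : eavg Q w ≠ ∞) :
    (eavg Q fun x => w x ^ s) ^ (1 / s) ≤ RHConst s w * eavg Q w := by
  rw [← ENNReal.div_le_iff_le_mul (.inl h0) (.inl htop)]
  exact le_iSup₂ (f := fun Q (_ : IsCube Q) =>
    (eavg Q fun x => w x ^ s) ^ (1 / s) / eavg Q w) Q hQ

lemma apCube_rpow (hp : p ≠ 1) (hs : 0 < s) (Q : Set (Fin n → ℝ)) (w : (Fin n → ℝ) → ℝ≥0∞) :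
    apCube (s * (p - 1) + 1) Q (fun x => w x ^ s)
      = ((eavg Q fun x => w x ^ s) ^ (1 / s)
          * (eavg Q fun x => w x ^ (1 - p / (p - 1))) ^ (p - 1)) ^ s := by
  have hp1 : p - 1 ≠ 0 := sub_ne_zero.mpr hp
  have hexp : s * (1 - (s * (p - 1) + 1) / (s * (p - 1))) = 1 - p / (p - 1) := by
    field_simp
    ring
  simp only [apCube, ← ENNReal.rpow_mul, add_sub_cancel_right, hexp]
  rw [ENNReal.mul_rpow_of_nonneg _ _ hs.le, ← ENNReal.rpow_mul, ← ENNReal.rpow_mul, one_div,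
    inv_mul_cancel₀ hs.ne', ENNReal.rpow_one, mul_comm (p - 1) s]

lemma mul_le_apConst_rpow_one_div (hp : p ≠ 1) (hs : 0 < s) (hQ : IsCube Q) :
    (eavg Q fun x => w x ^ s) ^ (1 / s) * (eavg Q fun x => w x ^ (1 - p / (p - 1))) ^ (p - 1)
      ≤ ApConst (s * (p - 1) + 1) (fun x => w x ^ s) ^ (1 / s) := by
  have hq : s * (p - 1) + 1 ≠ 1 := by simpa [sub_eq_zero] using ⟨hs.ne', hp⟩
  calc _ = apCube (s * (p - 1) + 1) Q (fun x => w x ^ s) ^ (1 / s) := by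
        rw [apCube_rpow hp hs, one_div, ENNReal.rpow_rpow_inv hs.ne']
    _ ≤ _ := by gcongr; exact apCube_le_apConst hq hQ

end ApCube

section Bounds

variable {p s : ℝ} {w : (Fin n → ℝ) → ℝ≥0∞}

theorem apConst_rpow_le (hp : 1 < p) (hs : 0 < s) (hw : IsWeight w) :
    ApConst (s * (p - 1) + 1) (fun x => w x ^ s) ≤ RHConst s w ^ s * ApConst p w ^ s := by
  have hq : s * (p - 1) + 1 ≠ 1 := by simpa [sub_eq_zero] using ⟨hs.ne', hp.ne'⟩
  rw [apConst_of_ne_one hq, ← ENNReal.mul_rpow_of_nonneg _ _ hs.le]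
  refine iSup₂_le fun Q hQ => ?_
  rw [apCube_rpow hp.ne' hs]
  refine ENNReal.rpow_le_rpow ?_ hs.le
  calc (eavg Q fun x => w x ^ s) ^ (1 / s)
        * (eavg Q fun x => w x ^ (1 - p / (p - 1))) ^ (p - 1)
      ≤ RHConst s w * eavg Q w * (eavg Q fun x => w x ^ (1 - p / (p - 1))) ^ (p - 1) := by
        gcongr
        exact eavg_rpow_le_rhConst_mul hQ (hw.eavg_ne_zero hQ) (hw.eavg_ne_top hQ)
    _ = RHConst s w * apCube p Q w := by rw [apCube, mul_assoc]
    _ ≤ RHConst s w * ApConst p w := by gcongr; exact apCube_le_apConst hp.ne' hQ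

theorem apConst_le_apConst_rpow_one_div (hp : 1 < p) (hs : 1 < s) (hw : Measurable w) :
    ApConst p w ≤ ApConst (s * (p - 1) + 1) (fun x => w x ^ s) ^ (1 / s) := by
  rw [apConst_of_ne_one hp.ne']
  refine iSup₂_le fun Q hQ =>
    le_trans ?_ (mul_le_apConst_rpow_one_div hp.ne' (zero_lt_one.trans hs) hQ)
  rw [apCube]
  gcongr
  exact eavg_le_eavg_rpow hs hQ.volume_ne_zero hQ.volume_ne_top hw

theorem rhConst_le_apConst_rpow_one_div (hp : 1 < p) (hs : 0 < s) (hw : Measurable w)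
    (hw' : ∀ᵐ x ∂volume, 0 < w x ∧ w x < ∞) :
    RHConst s w ≤ ApConst (s * (p - 1) + 1) (fun x => w x ^ s) ^ (1 / s) := by
  refine iSup₂_le fun Q hQ => ENNReal.div_le_of_le_mul ?_
  have hA := one_le_eavg_mul_eavg_rpow hp hw hw' hQ.volume_ne_zero hQ.volume_ne_top
  calc (eavg Q fun x => w x ^ s) ^ (1 / s)
      ≤ (eavg Q fun x => w x ^ s) ^ (1 / s)
          * (eavg Q w * (eavg Q fun x => w x ^ (1 - p / (p - 1))) ^ (p - 1)) :=
        le_mul_of_one_le_right' hA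
    _ = (eavg Q fun x => w x ^ s) ^ (1 / s)
          * (eavg Q fun x => w x ^ (1 - p / (p - 1))) ^ (p - 1) * eavg Q w := by ring
    _ ≤ ApConst (s * (p - 1) + 1) (fun x => w x ^ s) ^ (1 / s) * eavg Q w := by
        gcongr
        exact mul_le_apConst_rpow_one_div hp.ne' hs hQ

end Bounds

/-- For `1 < p, s < ∞`, `w ∈ A_p ∩ RH_s` iff `w^s ∈ A_q` with
`q = s(p-1)+1`; moreover in the forward direction `[w^s]_{A_q} ≤ [w]_{RH_s}^s [w]_{A_p}^s`. -/
theorem statement6 (n : ℕ) (p s : ℝ) (hp : 1 < p) (hs : 1 < s)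
    (w : (Fin n → ℝ) → ℝ≥0∞) (hw : IsWeight w) :
    ((MemAp p w ∧ MemRH s w) ↔ MemAp (s * (p - 1) + 1) (fun x => w x ^ s)) ∧
    (MemAp p w → MemRH s w →
      ApConst (s * (p - 1) + 1) (fun x => w x ^ s) ≤ RHConst s w ^ s * ApConst p w ^ s) := by
  have hs₀ : 0 < s := zero_lt_one.trans hs
  have hAq_le := apConst_rpow_le hp hs₀ hw
  have hAp_le := apConst_le_apConst_rpow_one_div hp hs hw.1
  have hRH_le := rhConst_le_apConst_rpow_one_div hp hs₀ hw.1 hw.2.1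
  simp only [MemAp, MemRH]
  refine ⟨⟨fun ⟨hAp, hRH⟩ => hAq_le.trans_lt ?_, fun hAq => ⟨?_, ?_⟩⟩, fun _ _ => hAq_le⟩
  · exact ENNReal.mul_lt_top (ENNReal.rpow_lt_top_of_nonneg hs₀.le hRH.ne)
      (ENNReal.rpow_lt_top_of_nonneg hs₀.le hAp.ne)
  · exact hAp_le.trans_lt (ENNReal.rpow_lt_top_of_nonneg (by positivity) hAq.ne)
  · exact hRH_le.trans_lt (ENNReal.rpow_lt_top_of_nonneg (by positivity) hAq.ne)
end
end

section
/- Let 1 < s < ∞ and let w₁, w₂ ∈ A_∞ be weights with w₁ ∈ RH_s and w₂ ∈ RH_{s'}, where s' = s/(s−1). Then there exists a constant C > 0 such that for every cube Q, (⨍_Q w₁^s dx)^{1/s} (⨍_Q w₂^{s'} dx)^{1/s'} ≤ C ⨍_Q w₁ w₂ dx. -/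
open MeasureTheory ENNReal
open scoped Classical

noncomputable section

variable {n : ℕ}

/-!
Reverse Hölder bounds `(⨍_Q w₁^s)^{1/s}` and `(⨍_Q w₂^{s'})^{1/s'}` by `⨍_Q w₁` and `⨍_Q w₂`, so
it suffices to show `⨍_Q w₁ · ⨍_Q w₂ ≲ ⨍_Q w₁ w₂`. A weight in `A_p` satisfies, for `ε = 1/(p-1)`
(or `ε = 1` when `p = 1`), `⨍_Q w ≤ B (⨍_Q w^{-ε})^{-1/ε}`. Hölder's inequality for three functions
applied to `1 = (w₁ w₂)^θ w₁^{-θ} w₂^{-θ}` with exponents `θ, θ/ε₁, θ/ε₂` summing to one gives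
`(⨍_Q w₁^{-ε₁})^{-1/ε₁} (⨍_Q w₂^{-ε₂})^{-1/ε₂} ≤ ⨍_Q w₁ w₂`.
-/

open ProbabilityTheory

theorem one_le_lintegral_mul_mul_lintegral_rpow_neg {X : Type*} [MeasurableSpace X]
    {ν : Measure X} [IsProbabilityMeasure ν] {f g : X → ℝ≥0∞}
    (hf : AEMeasurable f ν) (hg : AEMeasurable g ν)
    (hf₀ : ∀ᵐ x ∂ν, f x ≠ 0 ∧ f x ≠ ∞) (hg₀ : ∀ᵐ x ∂ν, g x ≠ 0 ∧ g x ≠ ∞)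
    {a b : ℝ} (ha : 0 < a) (hb : 0 < b) :
    1 ≤ (∫⁻ x, f x * g x ∂ν) * (∫⁻ x, f x ^ (-a) ∂ν) ^ a⁻¹ * (∫⁻ x, g x ^ (-b) ∂ν) ^ b⁻¹ := by
  -- `θ` makes the Hölder exponents `θ, θ/a, θ/b` sum to `1` while the powers of `f` and `g` cancel.
  set θ := (1 + a⁻¹ + b⁻¹)⁻¹
  have hθ : 0 < θ := by positivity
  have hsum : θ + θ * a⁻¹ + θ * b⁻¹ = 1 := by
    simp only [θ]
    field_simp
  have hone : ∀ᵐ x ∂ν,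
      (f x * g x) ^ θ * (f x ^ (-a)) ^ (θ * a⁻¹) * (g x ^ (-b)) ^ (θ * b⁻¹) = 1 := by
    filter_upwards [hf₀, hg₀] with x ⟨hf0, hftop⟩ ⟨hg0, hgtop⟩
    rw [ENNReal.mul_rpow_of_nonneg _ _ hθ.le, ← ENNReal.rpow_mul, ← ENNReal.rpow_mul,
      show -a * (θ * a⁻¹) = -θ by field_simp, show -b * (θ * b⁻¹) = -θ by field_simp]
    calc _ = (f x ^ θ * f x ^ (-θ)) * (g x ^ θ * g x ^ (-θ)) := by ring
      _ = 1 := by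
        rw [← ENNReal.rpow_add _ _ hf0 hftop, ← ENNReal.rpow_add _ _ hg0 hgtop, add_neg_cancel,
          ENNReal.rpow_zero, ENNReal.rpow_zero, one_mul]
  have holder := ENNReal.lintegral_prod_norm_pow_le (μ := ν) Finset.univ
    (f := ![fun x => f x * g x, fun x => f x ^ (-a), fun x => g x ^ (-b)])
    (p := ![θ, θ * a⁻¹, θ * b⁻¹])
    (fun i _ => by
      fin_cases i <;>
        simp only [Fin.zero_eta, Fin.mk_one, Fin.reduceFinMk, Fin.isValue, Matrix.cons_val_zero,
          Matrix.cons_val_one, Matrix.cons_val] <;> fun_prop)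
    (by simpa [Fin.sum_univ_three] using hsum)
    (fun i _ => by
      fin_cases i <;>
        simp only [Fin.zero_eta, Fin.mk_one, Fin.reduceFinMk, Fin.isValue, Matrix.cons_val_zero,
          Matrix.cons_val_one, Matrix.cons_val] <;> positivity)
  simp only [Fin.prod_univ_three, Fin.isValue, Matrix.cons_val] at holder
  rw [lintegral_congr_ae hone, lintegral_const, measure_univ, mul_one, mul_comm θ a⁻¹,
    mul_comm θ b⁻¹, ENNReal.rpow_mul, ENNReal.rpow_mul, ← ENNReal.mul_rpow_of_nonneg _ _ hθ.le,
    ← ENNReal.mul_rpow_of_nonneg _ _ hθ.le] at holder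
  by_contra! hlt
  exact (ENNReal.rpow_lt_one hlt hθ).not_ge holder

lemma volume_cube (a : Fin n → ℝ) (l : ℝ) :
    volume {x : Fin n → ℝ | ∀ i, a i ≤ x i ∧ x i < a i + l} = ENNReal.ofReal l ^ n := by
  have : {x : Fin n → ℝ | ∀ i, a i ≤ x i ∧ x i < a i + l} =
      Set.univ.pi fun i => Set.Ico (a i) (a i + l) := by
    ext x
    simp [Set.mem_pi]
  simp [this, volume_pi_pi, Real.volume_Ico]

namespace IsCube

variable {Q : Set (Fin n → ℝ)}

lemma volume_ne_zero_s7 (hQ : IsCube Q) : volume Q ≠ 0 := by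
  obtain ⟨a, l, hl, rfl⟩ := hQ
  rw [volume_cube]
  exact pow_ne_zero _ (ENNReal.ofReal_pos.2 hl).ne'

lemma volume_ne_top_s7 (hQ : IsCube Q) : volume Q ≠ ∞ := by
  obtain ⟨a, l, -, rfl⟩ := hQ
  rw [volume_cube]
  exact ENNReal.pow_ne_top ENNReal.ofReal_ne_top

lemma isProbabilityMeasure_cond (hQ : IsCube Q) : IsProbabilityMeasure volume[|Q] :=
  cond_isProbabilityMeasure_of_finite hQ.volume_ne_zero_s7 hQ.volume_ne_top_s7

end IsCube

lemma eavg_eq_lintegral_cond (Q : Set (Fin n → ℝ)) (f : (Fin n → ℝ) → ℝ≥0∞) :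
    eavg Q f = ∫⁻ x, f x ∂volume[|Q] := by
  rw [eavg, ← setLAverage_eq, setLAverage_eq']
  rfl

namespace IsWeight

variable {w : (Fin n → ℝ) → ℝ≥0∞} {Q : Set (Fin n → ℝ)}

lemma ae_cond_ne_zero_and_ne_top (hw : IsWeight w) (Q : Set (Fin n → ℝ)) :
    ∀ᵐ x ∂volume[|Q], w x ≠ 0 ∧ w x ≠ ∞ :=
  cond_absolutelyContinuous.ae_le (hw.2.1.mono fun _ hx => ⟨hx.1.ne', hx.2.ne⟩)

lemma eavg_ne_zero_s7 (hw : IsWeight w) (hQ : IsCube Q) : eavg Q w ≠ 0 := by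
  have := hQ.isProbabilityMeasure_cond
  rw [eavg_eq_lintegral_cond, Ne, lintegral_eq_zero_iff hw.1]
  intro hzero
  obtain ⟨x, hx0, hx⟩ := (hzero.and (hw.ae_cond_ne_zero_and_ne_top Q)).exists
  exact hx.1 hx0

lemma eavg_ne_top_s7 (hw : IsWeight w) (hQ : IsCube Q) : eavg Q w ≠ ∞ :=
  ENNReal.div_ne_top (hw.2.2 Q hQ).ne hQ.volume_ne_zero_s7

lemma eavg_rpow_rpow_le_RHConst_mul (hw : IsWeight w) (hQ : IsCube Q) (t : ℝ) :
    (eavg Q fun x => w x ^ t) ^ (1 / t) ≤ RHConst t w * eavg Q w :=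
  (ENNReal.div_le_iff (hw.eavg_ne_zero_s7 hQ) (hw.eavg_ne_top_s7 hQ)).1 <| le_iSup₂_of_le Q hQ le_rfl

end IsWeight

section Muckenhoupt

variable {w : (Fin n → ℝ) → ℝ≥0∞} {Q : Set (Fin n → ℝ)}

lemma eavg_mul_eavg_inv_le_ApConst_one (hQ : IsCube Q) :
    eavg Q w * eavg Q (fun x => (w x)⁻¹) ≤ ApConst 1 w := by
  have hess : essSup (fun x => eavg Q w * (w x)⁻¹) (volume.restrict Q) ≤ ApConst 1 w := by
    simp_rw [← div_eq_mul_inv]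
    rw [ApConst, if_pos rfl]
    exact le_iSup₂_of_le Q hQ le_rfl
  have hint : ∫⁻ x in Q, eavg Q w * (w x)⁻¹ ≤ ApConst 1 w * volume Q :=
    calc ∫⁻ x in Q, eavg Q w * (w x)⁻¹ ≤ ∫⁻ _ in Q, ApConst 1 w :=
          lintegral_mono_ae <| (ae_le_essSup _).mono fun _ hx => hx.trans hess
      _ = ApConst 1 w * volume Q := setLIntegral_const Q _
  calc eavg Q w * eavg Q (fun x => (w x)⁻¹)
      = (eavg Q w * ∫⁻ x in Q, (w x)⁻¹) / volume Q := (mul_div_assoc _ _ _).symm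
    _ ≤ (∫⁻ x in Q, eavg Q w * (w x)⁻¹) / volume Q := by
        gcongr
        exact lintegral_const_mul_le _ _
    _ ≤ ApConst 1 w * volume Q / volume Q := by gcongr
    _ = ApConst 1 w := ENNReal.mul_div_cancel_right hQ.volume_ne_zero_s7 hQ.volume_ne_top_s7

lemma eavg_mul_eavg_rpow_le_ApConst {p : ℝ} (hp : 1 < p) (hQ : IsCube Q) :
    eavg Q w * (eavg Q fun x => w x ^ (1 - p / (p - 1))) ^ (p - 1) ≤ ApConst p w := by
  rw [ApConst, if_neg hp.ne']
  exact le_iSup₂_of_le Q hQ le_rfl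

end Muckenhoupt

lemma exists_eavg_mul_eavg_rpow_neg_le_ApConst {p : ℝ} (hp : 1 ≤ p) (w : (Fin n → ℝ) → ℝ≥0∞) :
    ∃ ε : ℝ, 0 < ε ∧
      ∀ Q, IsCube Q → eavg Q w * (eavg Q fun x => w x ^ (-ε)) ^ ε⁻¹ ≤ ApConst p w := by
  rcases hp.eq_or_lt with rfl | hp
  · refine ⟨1, one_pos, fun Q hQ => ?_⟩
    simpa [ENNReal.rpow_neg_one] using eavg_mul_eavg_inv_le_ApConst_one (w := w) hQ
  · have hp' : 0 < p - 1 := sub_pos.2 hp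
    refine ⟨(p - 1)⁻¹, inv_pos.2 hp', fun Q hQ => ?_⟩
    rw [show -(p - 1)⁻¹ = 1 - p / (p - 1) by field_simp; ring, inv_inv]
    exact eavg_mul_eavg_rpow_le_ApConst hp hQ

lemma IsWeight.one_le_eavg_mul_mul_eavg_rpow_neg {w₁ w₂ : (Fin n → ℝ) → ℝ≥0∞}
    (hw₁ : IsWeight w₁) (hw₂ : IsWeight w₂) {Q : Set (Fin n → ℝ)} (hQ : IsCube Q)
    {a b : ℝ} (ha : 0 < a) (hb : 0 < b) :
    1 ≤ eavg Q (fun x => w₁ x * w₂ x) * (eavg Q fun x => w₁ x ^ (-a)) ^ a⁻¹ *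
      (eavg Q fun x => w₂ x ^ (-b)) ^ b⁻¹ := by
  have := hQ.isProbabilityMeasure_cond
  simp only [eavg_eq_lintegral_cond]
  exact one_le_lintegral_mul_mul_lintegral_rpow_neg hw₁.1.aemeasurable hw₂.1.aemeasurable
    (hw₁.ae_cond_ne_zero_and_ne_top Q) (hw₂.ae_cond_ne_zero_and_ne_top Q) ha hb

theorem statement7_general (n : ℕ) (s : ℝ)
    (w₁ w₂ : (Fin n → ℝ) → ℝ≥0∞) (hw₁ : IsWeight w₁) (hw₂ : IsWeight w₂)
    (hA₁ : ∃ p : ℝ, 1 ≤ p ∧ MemAp p w₁) (hA₂ : ∃ p : ℝ, 1 ≤ p ∧ MemAp p w₂)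
    (hrh₁ : MemRH s w₁) (hrh₂ : MemRH (s / (s - 1)) w₂) :
    ∃ C : ℝ≥0∞, 0 < C ∧ C < ∞ ∧
      ∀ Q : Set (Fin n → ℝ), IsCube Q →
        (eavg Q fun x => w₁ x ^ s) ^ (1 / s) *
            (eavg Q fun x => w₂ x ^ (s / (s - 1))) ^ (1 / (s / (s - 1))) ≤
          C * eavg Q fun x => w₁ x * w₂ x := by
  obtain ⟨p₁, hp₁, hAp₁⟩ := hA₁
  obtain ⟨p₂, hp₂, hAp₂⟩ := hA₂
  obtain ⟨ε₁, hε₁, hap₁⟩ := exists_eavg_mul_eavg_rpow_neg_le_ApConst hp₁ w₁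
  obtain ⟨ε₂, hε₂, hap₂⟩ := exists_eavg_mul_eavg_rpow_neg_le_ApConst hp₂ w₂
  set R₁ := RHConst s w₁
  set R₂ := RHConst (s / (s - 1)) w₂
  set K := R₁ * R₂ * (ApConst p₁ w₁ * ApConst p₂ w₂)
  have hK : K < ∞ :=
    ENNReal.mul_lt_top (ENNReal.mul_lt_top hrh₁ hrh₂) (ENNReal.mul_lt_top hAp₁ hAp₂)
  refine ⟨K + 1, by positivity, ENNReal.add_lt_top.2 ⟨hK, ENNReal.one_lt_top⟩, fun Q hQ => ?_⟩
  set Y₁ := (eavg Q fun x => w₁ x ^ (-ε₁)) ^ ε₁⁻¹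
  set Y₂ := (eavg Q fun x => w₂ x ^ (-ε₂)) ^ ε₂⁻¹
  calc _ ≤ R₁ * eavg Q w₁ * (R₂ * eavg Q w₂) :=
        mul_le_mul' (hw₁.eavg_rpow_rpow_le_RHConst_mul hQ s)
          (hw₂.eavg_rpow_rpow_le_RHConst_mul hQ _)
    _ ≤ R₁ * eavg Q w₁ * (R₂ * eavg Q w₂) * (eavg Q (fun x => w₁ x * w₂ x) * Y₁ * Y₂) :=
        le_mul_of_one_le_right' (hw₁.one_le_eavg_mul_mul_eavg_rpow_neg hw₂ hQ hε₁ hε₂)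
    _ = R₁ * R₂ * (eavg Q w₁ * Y₁ * (eavg Q w₂ * Y₂)) * eavg Q (fun x => w₁ x * w₂ x) := by ring
    _ ≤ K * eavg Q (fun x => w₁ x * w₂ x) :=
        mul_le_mul_left (mul_le_mul_right (mul_le_mul' (hap₁ Q hQ) (hap₂ Q hQ)) _) _
    _ ≤ (K + 1) * eavg Q (fun x => w₁ x * w₂ x) := by gcongr; exact le_self_add

/-- If `w₁, w₂ ∈ A_∞`, `w₁ ∈ RH_s` and `w₂ ∈ RH_{s'}` (`s' = s/(s-1)`),
then there is `C > 0` such that for every cube `Q`,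
`(⨍_Q w₁^s)^{1/s} (⨍_Q w₂^{s'})^{1/s'} ≤ C ⨍_Q w₁ w₂`. -/
theorem statement7 (n : ℕ) (s : ℝ) (hs : 1 < s)
    (w₁ w₂ : (Fin n → ℝ) → ℝ≥0∞) (hw₁ : IsWeight w₁) (hw₂ : IsWeight w₂)
    (hA₁ : ∃ p : ℝ, 1 ≤ p ∧ MemAp p w₁) (hA₂ : ∃ p : ℝ, 1 ≤ p ∧ MemAp p w₂)
    (hrh₁ : MemRH s w₁) (hrh₂ : MemRH (s / (s - 1)) w₂) :
    ∃ C : ℝ≥0∞, 0 < C ∧ C < ∞ ∧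
      ∀ Q : Set (Fin n → ℝ), IsCube Q →
        (eavg Q fun x => w₁ x ^ s) ^ (1 / s) *
            (eavg Q fun x => w₂ x ^ (s / (s - 1))) ^ (1 / (s / (s - 1))) ≤
          C * eavg Q fun x => w₁ x * w₂ x :=
  statement7_general n s w₁ w₂ hw₁ hw₂ hA₁ hA₂ hrh₁ hrh₂
end
end
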